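/- arXiv:2407.05344 — 2 statements merged into one kernel-verified Lean document; each statement's English description precedes it below -/
import Mathlib

section
/- For every positive integer q, ∑_{r=1}^{q} φ(gcd(q,r))^2 ≤ q^2. -/
/-!
Grouping `r` by `d = gcd q r`: exactly `φ (q / d)` residues have `gcd q r = d`, so the sum is
`∑_{d ∣ q} φ (q / d) φ d ^ 2`. Super-multiplicativity gives `φ (q / d) φ d ≤ φ q`, hence the sum is
at most `φ q ∑_{d ∣ q} φ d = q φ q ≤ q ^ 2`.
-/

open Finset

theorem Finset.sum_Icc_one_eq_sum_range {M : Type*} [AddCommMonoid M] (g : ℕ → M) {n : ℕ}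
    (h : g n = g 0) : ∑ r ∈ Icc 1 n, g r = ∑ r ∈ range n, g r := by
  cases n with
  | zero => rfl
  | succ m =>
    rw [sum_range_succ', ← h, ← Ico_add_one_right_eq_Icc, sum_Ico_succ_top (by omega),
      sum_Ico_eq_sum_range, add_tsub_cancel_right]
    simp only [add_comm 1]

namespace Nat

theorem sum_range_gcd_eq_sum_divisors {M : Type*} [AddCommMonoid M] (n : ℕ) (f : ℕ → M) :
    ∑ r ∈ range n, f (n.gcd r) = ∑ d ∈ n.divisors, φ (n / d) • f d := by
  rw [← sum_fiberwise_of_maps_to (t := n.divisors) (g := n.gcd)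
    fun r hr => mem_divisors.2 ⟨gcd_dvd_left n r, ne_zero_of_lt (mem_range.1 hr)⟩]
  refine sum_congr rfl fun d hd => ?_
  rw [totient_div_of_dvd (dvd_of_mem_divisors hd), ← sum_const]
  exact sum_congr rfl fun r hr => by rw [(mem_filter.1 hr).2]

theorem totient_div_mul_totient_le {n d : ℕ} (hd : d ∣ n) : φ (n / d) * φ d ≤ φ n := by
  simpa [Nat.div_mul_cancel hd] using totient_super_multiplicative (n / d) d

theorem sum_Icc_totient_gcd_sq_le (n : ℕ) :
    ∑ r ∈ Icc 1 n, φ (n.gcd r) ^ 2 ≤ n * φ n := by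
  rw [sum_Icc_one_eq_sum_range _ (by rw [gcd_self, gcd_zero_right]),
    sum_range_gcd_eq_sum_divisors n (φ · ^ 2)]
  calc ∑ d ∈ n.divisors, φ (n / d) • φ d ^ 2
      = ∑ d ∈ n.divisors, φ (n / d) * φ d * φ d := by simp only [smul_eq_mul, sq, mul_assoc]
    _ ≤ ∑ d ∈ n.divisors, φ n * φ d := by
        gcongr with d hd
        exact totient_div_mul_totient_le (dvd_of_mem_divisors hd)
    _ = n * φ n := by rw [← mul_sum, sum_totient, mul_comm]

end Nat

theorem stmt5_general (q : ℕ) :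
    ∑ r ∈ Finset.Icc 1 q, (Nat.totient (Nat.gcd q r)) ^ 2 ≤ q ^ 2 :=
  calc _ ≤ q * Nat.totient q := Nat.sum_Icc_totient_gcd_sq_le q
    _ ≤ q * q := Nat.mul_le_mul_left q (Nat.totient_le q)
    _ = q ^ 2 := (sq q).symm

theorem stmt5 (q : ℕ) (hq : 0 < q) :
    ∑ r ∈ Finset.Icc 1 q, (Nat.totient (Nat.gcd q r)) ^ 2 ≤ q ^ 2 :=
  stmt5_general q
end

section
/- Fix an integer c and positive integers q, r. The number of pairs (a,b) with 1 ≤ a ≤ q, 1 ≤ b ≤ r, gcd(a,q) = 1, gcd(b,r) = 1, and a r − b q = c is at most φ(gcd(q,r)). -/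
/-!
If `d = gcd q r`, `q = d q₁`, `r = d r₁`, two solutions `(a, b)`, `(a', b')` satisfy
`(a - a') r₁ = (b - b') q₁`, so `a - a' = q₁ s` and `b - b' = r₁ s`. Split `d = d₁ d₂` into coprime
factors with `d₁` prime to `q₁` and `d₂` prime to `r₁`. Then `a mod d₁` determines `s mod d₁` and
`b mod d₂` determines `s mod d₂`, hence `s mod d` and `a mod q`. So `(a, b) ↦ (a mod d₁, b mod d₂)` is
injective into pairs of units, of which there are `φ d₁ φ d₂ = φ d`.
-/

open Finset

namespace Nat

theorem exists_mul_eq_coprime_dvd_pow (x : ℕ) {n : ℕ} (hn : n ≠ 0) :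
    ∃ n₁ n₂ k, n₁ * n₂ = n ∧ n₁.Coprime x ∧ n₂ ∣ x ^ k := by
  induction n using Nat.strong_induction_on with
  | _ n ih =>
  by_cases hnx : n.Coprime x
  · exact ⟨n, 1, 0, mul_one n, hnx, one_dvd _⟩
  obtain ⟨m, hm⟩ := n.gcd_dvd_left x
  have hm0 : m ≠ 0 := by rintro rfl; exact hn hm
  have hgcd : 1 < n.gcd x := by
    have := Nat.gcd_pos_of_pos_left x (Nat.pos_of_ne_zero hn)
    unfold Nat.Coprime at hnx
    omega
  have hlt : m < n := hm ▸ lt_mul_left (Nat.pos_of_ne_zero hm0) hgcd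
  obtain ⟨n₁, n₂, k, hm₁₂, hn₁, hn₂⟩ := ih m hlt hm0
  refine ⟨n₁, n.gcd x * n₂, k + 1, by rw [mul_left_comm, hm₁₂, ← hm], hn₁, ?_⟩
  rw [pow_succ']
  exact mul_dvd_mul (n.gcd_dvd_right x) hn₂

theorem Coprime.exists_mul_eq_coprime_coprime {m n : ℕ} (hmn : m.Coprime n) {d : ℕ} (hd : d ≠ 0) :
    ∃ d₁ d₂, d₁ * d₂ = d ∧ d₁.Coprime d₂ ∧ d₁.Coprime m ∧ d₂.Coprime n := by
  obtain ⟨d₁, d₂, k, rfl, hd₁, hd₂⟩ := exists_mul_eq_coprime_dvd_pow m hd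
  exact ⟨d₁, d₂, rfl, (hd₁.pow_right k).coprime_dvd_right hd₂, hd₁,
    (hmn.pow_left k).coprime_dvd_left hd₂⟩

theorem Coprime.mod_mem_filter_range {n a : ℕ} (hn : 0 < n) (h : a.Coprime n) :
    a % n ∈ {x ∈ range n | n.Coprime x} :=
  mem_filter.mpr ⟨mem_range.mpr (a.mod_lt hn), by rw [Coprime, gcd_comm, ← gcd_rec]; exact h.symm⟩

end Nat

theorem mul_mul_dvd_of_mul_eq_mul {R : Type*} [CommRing R] [IsDomain R] {d₁ d₂ q₁ r₁ x y : R}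
    (hq₁ : q₁ ≠ 0) (hqr : IsCoprime q₁ r₁) (h₁ : IsCoprime d₁ q₁) (h₂ : IsCoprime d₂ r₁)
    (h₁₂ : IsCoprime d₁ d₂) (h : x * r₁ = y * q₁) (hx : d₁ ∣ x) (hy : d₂ ∣ y) :
    d₁ * d₂ * q₁ ∣ x := by
  obtain ⟨s, rfl⟩ : q₁ ∣ x := hqr.dvd_of_dvd_mul_right ⟨y, by rw [h, mul_comm]⟩
  have hys : y = r₁ * s := mul_right_cancel₀ hq₁ (by rw [← h]; ring)
  rw [mul_comm _ q₁]
  exact mul_dvd_mul_left q₁ <| h₁₂.mul_dvd (h₁.dvd_of_dvd_mul_left hx)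
    (h₂.dvd_of_dvd_mul_left (hys ▸ hy))

theorem eq_of_mul_sub_mul_eq_of_modEq {q r d₁ d₂ : ℕ} (hq : 0 < q) (hd : d₁ * d₂ = q.gcd r)
    (h₁₂ : d₁.Coprime d₂) (h₁ : d₁.Coprime (q / q.gcd r)) (h₂ : d₂.Coprime (r / q.gcd r))
    {a b a' b' : ℕ} (ha : a ∈ Icc 1 q) (ha' : a' ∈ Icc 1 q)
    (h : (a : ℤ) * r - b * q = a' * r - b' * q) (hma : a ≡ a' [MOD d₁]) (hmb : b ≡ b' [MOD d₂]) :
    a = a' ∧ b = b' := by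
  have hd0 : (d₁ * d₂ : ℤ) ≠ 0 := by exact_mod_cast hd ▸ (Nat.gcd_pos_of_pos_left r hq).ne'
  have hq' : (q : ℤ) = d₁ * d₂ * ↑(q / q.gcd r) := by
    rw [← Nat.cast_mul, ← Nat.cast_mul, hd, Nat.mul_div_cancel' (q.gcd_dvd_left r)]
  have hr' : (r : ℤ) = d₁ * d₂ * ↑(r / q.gcd r) := by
    rw [← Nat.cast_mul, ← Nat.cast_mul, hd, Nat.mul_div_cancel' (q.gcd_dvd_right r)]
  have hdiff : ((a' : ℤ) - a) * ↑(r / q.gcd r) = ((b' : ℤ) - b) * ↑(q / q.gcd r) := by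
    refine mul_left_cancel₀ hd0 ?_
    rw [hq', hr'] at h
    linear_combination -h
  have hqdvd : (q : ℤ) ∣ a' - a := hq' ▸ mul_mul_dvd_of_mul_eq_mul
    (by exact_mod_cast (Nat.div_pos (q.gcd_le_left r hq) (Nat.gcd_pos_of_pos_left r hq)).ne')
    (Nat.isCoprime_iff_coprime.mpr (Nat.coprime_div_gcd_div_gcd (Nat.gcd_pos_of_pos_left r hq)))
    (Nat.isCoprime_iff_coprime.mpr h₁) (Nat.isCoprime_iff_coprime.mpr h₂)
    (Nat.isCoprime_iff_coprime.mpr h₁₂) hdiff hma.dvd hmb.dvd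
  rw [mem_Icc] at ha ha'
  have haa : (a' : ℤ) - a = 0 := Int.eq_zero_of_abs_lt_dvd hqdvd (by rw [abs_lt]; omega)
  have hbb : ((b' : ℤ) - b) * q = 0 := by linear_combination h + r * haa
  refine ⟨by omega, ?_⟩
  rcases mul_eq_zero.mp hbb with hb | hq0 <;> omega

theorem stmt18_general (q r : ℕ) (hq : 0 < q) (c : ℤ) :
    (((Finset.Icc 1 q) ×ˢ (Finset.Icc 1 r)).filter (fun ab : ℕ × ℕ =>
        Nat.gcd ab.1 q = 1 ∧ Nat.gcd ab.2 r = 1 ∧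
        (ab.1 : ℤ) * (r : ℤ) - (ab.2 : ℤ) * (q : ℤ) = c)).card
      ≤ Nat.totient (Nat.gcd q r) := by
  have hd : 0 < q.gcd r := Nat.gcd_pos_of_pos_left r hq
  obtain ⟨d₁, d₂, hd₁₂, hcop, hd₁, hd₂⟩ :=
    (Nat.coprime_div_gcd_div_gcd hd).exists_mul_eq_coprime_coprime hd.ne'
  calc _ ≤ #({x ∈ range d₁ | d₁.Coprime x} ×ˢ {x ∈ range d₂ | d₂.Coprime x}) := by
        refine card_le_card_of_injOn (fun ab => (ab.1 % d₁, ab.2 % d₂)) ?_ ?_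
        · obtain ⟨hd₁0, hd₂0⟩ := CanonicallyOrderedAdd.mul_pos.mp (hd₁₂ ▸ hd)
          rintro ⟨a, b⟩ hab
          simp only [coe_filter, mem_product, Set.mem_ofPred_eq, mem_coe] at hab ⊢
          exact ⟨(Nat.Coprime.coprime_dvd_right (Dvd.intro d₂ hd₁₂ |>.trans (q.gcd_dvd_left r))
              hab.2.1).mod_mem_filter_range hd₁0,
            (Nat.Coprime.coprime_dvd_right (Dvd.intro_left d₁ hd₁₂ |>.trans (q.gcd_dvd_right r))
              hab.2.2.1).mod_mem_filter_range hd₂0⟩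
        · rintro ⟨a, b⟩ hab ⟨a', b'⟩ hab' hmod
          simp only [coe_filter, mem_product, Set.mem_ofPred_eq, Prod.mk.injEq] at hab hab' hmod ⊢
          exact eq_of_mul_sub_mul_eq_of_modEq hq hd₁₂ hcop hd₁ hd₂ hab.1.1 hab'.1.1
            (hab.2.2.2.trans hab'.2.2.2.symm) hmod.1 hmod.2
    _ = Nat.totient (q.gcd r) := by rw [card_product, ← hd₁₂, Nat.totient_mul hcop]; rfl

theorem stmt18 (q r : ℕ) (hq : 0 < q) (hr : 0 < r) (c : ℤ) :
    (((Finset.Icc 1 q) ×ˢ (Finset.Icc 1 r)).filter (fun ab : ℕ × ℕ =>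
        Nat.gcd ab.1 q = 1 ∧ Nat.gcd ab.2 r = 1 ∧
        (ab.1 : ℤ) * (r : ℤ) - (ab.2 : ℤ) * (q : ℤ) = c)).card
      ≤ Nat.totient (Nat.gcd q r) :=
  stmt18_general q r hq c
end
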